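/- arXiv:1709.00055 — 4 statements merged into one kernel-verified Lean document; each statement's English description precedes it below -/
import Mathlib

section
/- Let (F_n)_{n≥1} be a sequence of row-stochastic square matrices of size k, and for each n,m let G_{(n+m,n)} = F_{n+m} ⋯ F_n. If the maximal ℓ¹-distance between pairs of rows of F_n tends to 0 as n → ∞, then for every fixed n, the maximal ℓ¹-distance between pairs of rows of G_{(n+m,n)} tends to 0 as m → ∞. -/
open Matrix BigOperators

/-- if the maximal ℓ¹-distance between rows of `F n` tends to 0, then
for each fixed `n` the maximal ℓ¹-distance between rows of the products
`G n m = F (n+m) * ⋯ * F n` tends to 0 as `m → ∞`. -/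
theorem stmt3 (k : ℕ) (F : ℕ → Matrix (Fin k) (Fin k) ℝ)
    (hF0 : ∀ n i j, 0 ≤ F n i j) (hF1 : ∀ n i, ∑ j, F n i j = 1)
    (G : ℕ → ℕ → Matrix (Fin k) (Fin k) ℝ)
    (hG0 : ∀ n, G n 0 = F n)
    (hGs : ∀ n m, G n (m + 1) = F (n + m + 1) * G n m)
    (hconv : ∀ ε > (0 : ℝ), ∃ N, ∀ n ≥ N, ∀ v v' : Fin k,
      ∑ w, |F n v w - F n v' w| < ε) :
    ∀ n, ∀ ε > (0 : ℝ), ∃ M, ∀ m ≥ M, ∀ v v' : Fin k,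
      ∑ w, |G n m v w - G n m v' w| < ε := by
  have hpos : ∀ n m i j, 0 ≤ G n m i j := by
    intro n m
    induction m with
    | zero => intro i j; rw [hG0]; exact hF0 n i j
    | succ m ih =>
      intro i j
      rw [hGs, Matrix.mul_apply]
      exact Finset.sum_nonneg fun u _ => mul_nonneg (hF0 _ _ _) (ih u j)
  have hsum : ∀ n m i, ∑ j, G n m i j = 1 := by
    intro n m
    induction m with
    | zero => intro i; rw [hG0]; exact hF1 n i
    | succ m ih =>
      intro i
      rw [hGs]
      simp only [Matrix.mul_apply]
      rw [Finset.sum_comm]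
      calc ∑ u, ∑ j, F (n+m+1) i u * G n m u j
          = ∑ u, F (n+m+1) i u * ∑ j, G n m u j := by
            simp [Finset.mul_sum]
        _ = 1 := by simp only [ih, mul_one]; exact hF1 _ i
  intro n ε hε
  obtain ⟨N, hN⟩ := hconv ε hε
  refine ⟨N + 1, fun m hm v v' => ?_⟩
  obtain ⟨m', rfl⟩ : ∃ m', m = m' + 1 := ⟨m - 1, by omega⟩
  have key : ∀ w, G n (m'+1) v w - G n (m'+1) v' w
      = ∑ u, (F (n+m'+1) v u - F (n+m'+1) v' u) * G n m' u w := by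
    intro w
    rw [hGs]
    simp [Matrix.mul_apply, sub_mul, Finset.sum_sub_distrib]
  calc ∑ w, |G n (m'+1) v w - G n (m'+1) v' w|
      ≤ ∑ w, ∑ u, |F (n+m'+1) v u - F (n+m'+1) v' u| * G n m' u w := by
        refine Finset.sum_le_sum fun w _ => ?_
        rw [key w]
        refine (Finset.abs_sum_le_sum_abs _ _).trans
          (Finset.sum_le_sum fun u _ => ?_)
        rw [abs_mul, abs_of_nonneg (hpos n m' u w)]
    _ = ∑ u, |F (n+m'+1) v u - F (n+m'+1) v' u| := by
        rw [Finset.sum_comm]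
        simp [← Finset.mul_sum, hsum]
    _ < ε := hN _ (by omega) v v'
end

section
/- Oscillation contraction for stochastic matrices: let F be a row-stochastic k×k matrix with k ≥ 2 whose entries all satisfy f_{ij} ≥ m for some m ≥ 0, and let x ∈ ℝ^k. Then the oscillation of Fx satisfies max_i (Fx)_i − min_i (Fx)_i ≤ (1 − 2m) (max_j x_j − min_j x_j). -/
open Matrix BigOperators

theorem stmt4 (k : ℕ) (hk : 2 ≤ k) (F : Matrix (Fin k) (Fin k) ℝ)
    (m : ℝ) (hm : 0 ≤ m)
    (hF0 : ∀ i j, m ≤ F i j) (hF1 : ∀ i, ∑ j, F i j = 1)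
    (x : Fin k → ℝ) :
    haveI : NeZero k := ⟨by omega⟩
    (⨆ i, (F.mulVec x) i) - (⨅ i, (F.mulVec x) i)
      ≤ (1 - 2 * m) * ((⨆ j, x j) - (⨅ j, x j)) := by
  haveI : NeZero k := ⟨by omega⟩
  haveI hne : Nonempty (Fin k) := ⟨⟨0, by omega⟩⟩
  obtain ⟨jM, hjM⟩ := Finite.exists_max x
  obtain ⟨jL, hjL⟩ := Finite.exists_min x
  set M := ⨆ j, x j with hM
  set L := ⨅ j, x j with hL
  have hMx : M = x jM :=
    le_antisymm (ciSup_le hjM) (le_ciSup (Set.Finite.bddAbove (Set.finite_range x)) jM)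
  have hLx : L = x jL :=
    le_antisymm (ciInf_le (Set.Finite.bddBelow (Set.finite_range x)) jL) (le_ciInf hjL)
  have hML : L ≤ M := by rw [hMx, hLx]; exact hjL jM
  have key : ∀ (i : Fin k) (j0 : Fin k),
      F.mulVec x i ≤ M + F i j0 * (x j0 - M) := by
    intro i j0
    have h1 : F.mulVec x i ≤ ∑ j, (F i j * M + if j = j0 then F i j0 * (x j0 - M) else 0) := by
      rw [mulVec, dotProduct]
      apply Finset.sum_le_sum
      intro j _
      by_cases hj : j = j0
      · subst hj; rw [if_pos rfl]; linarith [mul_sub (F i j) (x j) M]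
      · rw [if_neg hj]
        have : 0 ≤ F i j := le_trans hm (hF0 i j)
        nlinarith [hjM j]
    have h2 : ∑ j, (F i j * M + if j = j0 then F i j0 * (x j0 - M) else 0)
        = M + F i j0 * (x j0 - M) := by
      rw [Finset.sum_add_distrib, ← Finset.sum_mul, hF1 i, Finset.sum_ite_eq']
      simp
    linarith [h1, h2.le, h2.ge]
  have keylo : ∀ (i : Fin k) (j0 : Fin k),
      L + F i j0 * (x j0 - L) ≤ F.mulVec x i := by
    intro i j0
    have h1 : ∑ j, (F i j * L + if j = j0 then F i j0 * (x j0 - L) else 0) ≤ F.mulVec x i := by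
      rw [mulVec, dotProduct]
      apply Finset.sum_le_sum
      intro j _
      by_cases hj : j = j0
      · subst hj; rw [if_pos rfl]; linarith [mul_sub (F i j) (x j) L]
      · rw [if_neg hj]
        have : 0 ≤ F i j := le_trans hm (hF0 i j)
        nlinarith [hjL j]
    have h2 : ∑ j, (F i j * L + if j = j0 then F i j0 * (x j0 - L) else 0)
        = L + F i j0 * (x j0 - L) := by
      rw [Finset.sum_add_distrib, ← Finset.sum_mul, hF1 i, Finset.sum_ite_eq']
      simp
    linarith [h1, h2.le, h2.ge]
  have hub : ∀ i, F.mulVec x i ≤ M - m * (M - L) := by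
    intro i
    have := key i jL
    have h3 : F i jL * (x jL - M) ≤ m * (x jL - M) := by
      have h4 : x jL - M ≤ 0 := by rw [← hLx]; linarith
      nlinarith [hF0 i jL]
    rw [← hLx] at this h3
    linarith [mul_sub m L M, mul_sub m M L]
  have hlb : ∀ i, L + m * (M - L) ≤ F.mulVec x i := by
    intro i
    have := keylo i jM
    have h3 : m * (x jM - L) ≤ F i jM * (x jM - L) := by
      have h4 : 0 ≤ x jM - L := by rw [← hMx]; linarith
      nlinarith [hF0 i jM]
    rw [← hMx] at this h3
    linarith [mul_sub m M L]
  have hsup : (⨆ i, F.mulVec x i) ≤ M - m * (M - L) := ciSup_le hub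
  have hinf : L + m * (M - L) ≤ (⨅ i, F.mulVec x i) := le_ciInf hlb
  nlinarith
end

section
/- Let (F_n)_{n≥1} be row-stochastic k×k matrices with k ≥ 2, let m_n = min over all entries of F_n, and suppose ∑_{n≥1} m_n = ∞. Then for every x ∈ ℝ^k, the oscillation of F_n F_{n−1} ⋯ F_1 x tends to 0 as n → ∞; in particular, the rows of the products F_n ⋯ F_1 become asymptotically equal (the maximal ℓ¹-distance between pairs of rows of the product tends to 0). -/
open Matrix BigOperators Filter

section aux
variable {k : ℕ} [NeZero k]

noncomputable def osc (x : Fin k → ℝ) : ℝ := (⨆ i, x i) - (⨅ i, x i)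

lemma le_osc_sup (x : Fin k → ℝ) (j : Fin k) : x j ≤ ⨆ i, x i :=
  le_ciSup (Set.finite_range x).bddAbove j

lemma osc_inf_le (x : Fin k → ℝ) (j : Fin k) : (⨅ i, x i) ≤ x j :=
  ciInf_le (Set.finite_range x).bddBelow j

lemma osc_nonneg (x : Fin k → ℝ) : 0 ≤ osc x := by
  have i : Fin k := ⟨0, Nat.pos_of_ne_zero (NeZero.ne k)⟩
  have := (osc_inf_le x i).trans (le_osc_sup x i)
  simpa [osc, sub_nonneg] using this

lemma osc_mulVec (A : Matrix (Fin k) (Fin k) ℝ) (m : ℝ)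
    (hA : ∀ i j, m ≤ A i j) (h1 : ∀ i, ∑ j, A i j = 1) (x : Fin k → ℝ) :
    osc (A.mulVec x) ≤ (1 - k * m) * osc x := by
  set M := ⨆ i, x i with hM
  set mm := ⨅ i, x i with hmm
  have hdecomp : ∀ i, A.mulVec x i = m * ∑ j, x j + ∑ j, (A i j - m) * x j := by
    intro i
    simp only [Matrix.mulVec, dotProduct]
    rw [Finset.mul_sum, ← Finset.sum_add_distrib]
    exact Finset.sum_congr rfl fun j _ => by ring
  have hsub : ∀ i, ∑ j : Fin k, (A i j - m) = 1 - k * m := by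
    intro i
    rw [Finset.sum_sub_distrib, h1 i]
    simp [mul_comm]
  have hup : ∀ i, A.mulVec x i ≤ m * ∑ j, x j + (1 - k * m) * M := by
    intro i
    rw [hdecomp i]
    have h2 : ∑ j, (A i j - m) * x j ≤ ∑ j, (A i j - m) * M :=
      Finset.sum_le_sum fun j _ =>
        mul_le_mul_of_nonneg_left (le_osc_sup x j) (sub_nonneg.2 (hA i j))
    have h3 : ∑ j, (A i j - m) * M = (1 - k * m) * M := by
      rw [← Finset.sum_mul, hsub i]
    linarith
  have hlow : ∀ i, m * ∑ j, x j + (1 - k * m) * mm ≤ A.mulVec x i := by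
    intro i
    rw [hdecomp i]
    have h2 : ∑ j, (A i j - m) * mm ≤ ∑ j, (A i j - m) * x j :=
      Finset.sum_le_sum fun j _ =>
        mul_le_mul_of_nonneg_left (osc_inf_le x j) (sub_nonneg.2 (hA i j))
    have h3 : ∑ j, (A i j - m) * mm = (1 - k * m) * mm := by
      rw [← Finset.sum_mul, hsub i]
    linarith
  have hsup : (⨆ i, A.mulVec x i) ≤ m * ∑ j, x j + (1 - k * m) * M := ciSup_le hup
  have hinf : m * ∑ j, x j + (1 - k * m) * mm ≤ ⨅ i, A.mulVec x i := le_ciInf hlow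
  have : osc (A.mulVec x) ≤ (1 - k * m) * M - (1 - k * m) * mm := by
    unfold osc; linarith
  calc osc (A.mulVec x) ≤ (1 - k * m) * M - (1 - k * m) * mm := this
    _ = (1 - k * m) * osc x := by unfold osc; ring

end aux

/-- if the minimal entries `mn n` of stochastic matrices `F n`
satisfy `∑ mn n = ∞`, then the oscillation of `F n ⋯ F 1 x` tends to 0 for
every `x`, and the rows of the products become asymptotically equal in ℓ¹. -/
theorem stmt5 (k : ℕ) (hk : 2 ≤ k)
    (F : ℕ → Matrix (Fin k) (Fin k) ℝ)
    (hF0 : ∀ n i j, 0 ≤ F n i j) (hF1 : ∀ n i, ∑ j, F n i j = 1)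
    (mn : ℕ → ℝ)
    (hmn : ∀ n, haveI : NeZero k := ⟨by omega⟩; mn n = ⨅ i : Fin k, ⨅ j : Fin k, F n i j)
    (hdiv : Tendsto (fun N => ∑ n ∈ Finset.range N, mn (n + 1)) atTop atTop)
    (P : ℕ → Matrix (Fin k) (Fin k) ℝ)
    (hP1 : P 1 = F 1) (hPs : ∀ n ≥ 1, P (n + 1) = F (n + 1) * P n) :
    haveI : NeZero k := ⟨by omega⟩
    (∀ x : Fin k → ℝ,
      Tendsto (fun n => (⨆ i, ((P n).mulVec x) i) - (⨅ i, ((P n).mulVec x) i))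
        atTop (nhds 0)) ∧
    (∀ ε > (0 : ℝ), ∃ N, ∀ n ≥ N, ∀ v v' : Fin k,
      ∑ w, |P n v w - P n v' w| < ε) := by
  haveI : NeZero k := ⟨by omega⟩
  -- basic facts about mn
  have hmnle : ∀ n i j, mn n ≤ F n i j := by
    intro n i j
    rw [hmn n]
    exact le_trans (ciInf_le (Set.finite_range _).bddBelow i)
      (ciInf_le (Set.finite_range _).bddBelow j)
  have hmn0 : ∀ n, 0 ≤ mn n := by
    intro n
    rw [hmn n]
    exact le_ciInf fun i => le_ciInf fun j => hF0 n i j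
  have hkmn : ∀ n, (k : ℝ) * mn n ≤ 1 := by
    intro n
    have i0 : Fin k := ⟨0, by omega⟩
    calc (k : ℝ) * mn n = ∑ _j : Fin k, mn n := by simp [mul_comm]
      _ ≤ ∑ j, F n i0 j := Finset.sum_le_sum fun j _ => hmnle n i0 j
      _ = 1 := hF1 n i0
  have hk2 : (2:ℝ) ≤ (k:ℝ) := by exact_mod_cast hk
  have h2mn : ∀ n, 2 * mn n ≤ 1 := by
    intro n
    nlinarith [hmn0 n, hkmn n, mul_nonneg (sub_nonneg.2 hk2) (hmn0 n)]
  -- the contraction step specialized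
  have step : ∀ n (y : Fin k → ℝ), osc ((F n).mulVec y) ≤ (1 - 2 * mn n) * osc y := by
    intro n y
    calc osc ((F n).mulVec y) ≤ (1 - k * mn n) * osc y :=
          osc_mulVec (F n) (mn n) (hmnle n) (hF1 n) y
      _ ≤ (1 - 2 * mn n) * osc y := by
          apply mul_le_mul_of_nonneg_right _ (osc_nonneg y)
          nlinarith [hmn0 n, mul_nonneg (sub_nonneg.2 hk2) (hmn0 n)]
  set Q : ℕ → ℝ := fun n => ∏ j ∈ Finset.range n, (1 - 2 * mn (j + 1)) with hQ
  have hfac0 : ∀ j, 0 ≤ 1 - 2 * mn j := fun j => by linarith [h2mn j]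
  have hQ0 : ∀ n, 0 ≤ Q n := fun n => Finset.prod_nonneg fun j _ => hfac0 (j + 1)
  have key : ∀ (x : Fin k → ℝ) n, 1 ≤ n → osc ((P n).mulVec x) ≤ Q n * osc x := by
    intro x n hn
    induction n with
    | zero => omega
    | succ n ih =>
      rcases Nat.lt_or_ge n 1 with h | h
      · interval_cases n
        rw [hP1]
        simpa [hQ] using step 1 x
      · rw [hPs n h, ← Matrix.mulVec_mulVec]
        calc osc ((F (n+1)).mulVec ((P n).mulVec x))
            ≤ (1 - 2 * mn (n+1)) * osc ((P n).mulVec x) := step (n+1) _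
          _ ≤ (1 - 2 * mn (n+1)) * (Q n * osc x) :=
              mul_le_mul_of_nonneg_left (ih h) (hfac0 (n+1))
          _ = Q (n+1) * osc x := by
              simp only [hQ, Finset.prod_range_succ]; ring
  -- Q tends to 0
  have hQexp : ∀ n, Q n ≤ Real.exp (-(2 * ∑ j ∈ Finset.range n, mn (j + 1))) := by
    intro n
    have : Real.exp (-(2 * ∑ j ∈ Finset.range n, mn (j + 1)))
        = ∏ j ∈ Finset.range n, Real.exp (-(2 * mn (j + 1))) := by
      rw [← Real.exp_sum]
      congr 1
      rw [Finset.mul_sum, neg_eq_iff_eq_neg, ← Finset.sum_neg_distrib]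
      exact Finset.sum_congr rfl fun j _ => by ring
    rw [this]
    exact Finset.prod_le_prod (fun j _ => hfac0 (j + 1))
      (fun j _ => by linarith [Real.add_one_le_exp (-(2 * mn (j + 1)))])
  have hQtends : Tendsto Q atTop (nhds 0) := by
    apply squeeze_zero hQ0 hQexp
    apply Real.tendsto_exp_atBot.comp
    apply Filter.tendsto_neg_atBot_iff.mpr
    exact hdiv.const_mul_atTop (by norm_num : (0:ℝ) < 2)
  have part1 : ∀ x : Fin k → ℝ,
      Tendsto (fun n => osc ((P n).mulVec x)) atTop (nhds 0) := by
    intro x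
    have hlim : Tendsto (fun n => Q n * osc x) atTop (nhds 0) := by
      simpa using hQtends.mul_const (osc x)
    apply squeeze_zero' (Filter.Eventually.of_forall fun n => osc_nonneg _)
      _ hlim
    filter_upwards [Filter.eventually_ge_atTop 1] with n hn
    exact key x n hn
  constructor
  · exact part1
  · intro ε hε
    have hcol : ∀ w : Fin k,
        Tendsto (fun n => osc ((P n).mulVec (Pi.single w 1))) atTop (nhds 0) :=
      fun w => part1 (Pi.single w 1)
    have hsum : Tendsto (fun n => ∑ w : Fin k, osc ((P n).mulVec (Pi.single w 1)))
        atTop (nhds 0) := by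
      have := tendsto_finset_sum Finset.univ (fun w _ => hcol w)
      simpa using this
    have hev : ∀ᶠ n in atTop,
        (∑ w : Fin k, osc ((P n).mulVec (Pi.single w 1))) < ε :=
      hsum.eventually (gt_mem_nhds hε)
    obtain ⟨N, hN⟩ := Filter.eventually_atTop.mp hev
    refine ⟨N, fun n hn v v' => ?_⟩
    have hterm : ∀ w : Fin k, |P n v w - P n v' w| ≤ osc ((P n).mulVec (Pi.single w 1)) := by
      intro w
      have hone : ∀ u : Fin k, (P n).mulVec (Pi.single w 1) u = P n u w := by
        intro u
        simp [Matrix.mulVec, dotProduct, Pi.single_apply]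
      rw [abs_sub_le_iff]
      constructor
      · have h1 := le_osc_sup ((P n).mulVec (Pi.single w 1)) v
        have h2 := osc_inf_le ((P n).mulVec (Pi.single w 1)) v'
        rw [hone v] at h1; rw [hone v'] at h2
        unfold osc; linarith
      · have h1 := le_osc_sup ((P n).mulVec (Pi.single w 1)) v'
        have h2 := osc_inf_le ((P n).mulVec (Pi.single w 1)) v
        rw [hone v'] at h1; rw [hone v] at h2
        unfold osc; linarith
    calc ∑ w, |P n v w - P n v' w|
        ≤ ∑ w : Fin k, osc ((P n).mulVec (Pi.single w 1)) :=
          Finset.sum_le_sum fun w _ => hterm w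
      _ < ε := hN n hn
end

section
/- For the diagram with matrices F_n = [[1 − 1/(n+1), 1/(n+1)],[1/(n+1), 1 − 1/(n+1)]], the ℓ¹-distance between the two rows of the product F_{n+m} ⋯ F_n equals 2 ∏_{i=0}^{m} (1 − 2/(n+i+1)), and for each fixed n this quantity tends to 0 as m → ∞. -/
open Matrix BigOperators Filter

/-- for `F j = !![1 - 1/(j+1), 1/(j+1); 1/(j+1), 1 - 1/(j+1)]`
and ordered products `G 0 = F n`, `G (m+1) = F (n+m+1) * G m` (with `n ≥ 1`),
the ℓ¹-distance between the rows of `G m` equals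
`2 ∏_{i=0}^{m} (1 - 2/(n+i+1))` and tends to `0` as `m → ∞`. -/
theorem stmt16 (F : ℕ → Matrix (Fin 2) (Fin 2) ℝ)
    (hF : ∀ j : ℕ, F j = !![1 - 1/(j+1 : ℝ), 1/(j+1 : ℝ);
                            1/(j+1 : ℝ), 1 - 1/(j+1 : ℝ)])
    (n : ℕ) (hn : 1 ≤ n)
    (G : ℕ → Matrix (Fin 2) (Fin 2) ℝ)
    (hG0 : G 0 = F n) (hGs : ∀ m, G (m + 1) = F (n + m + 1) * G m) :
    (∀ m, |G m 0 0 - G m 1 0| + |G m 0 1 - G m 1 1|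
      = 2 * ∏ i ∈ Finset.range (m + 1), (1 - 2 / (n + i + 1 : ℝ))) ∧
    Tendsto (fun m => |G m 0 0 - G m 1 0| + |G m 0 1 - G m 1 1|)
      atTop (nhds 0) := by
  have hn1 : (1:ℝ) ≤ (n:ℝ) := by exact_mod_cast hn
  set P : ℕ → ℝ := fun m => ∏ i ∈ Finset.range (m+1), (1 - 2/((n:ℝ) + i + 1)) with hP
  have hpos : ∀ i : ℕ, (0:ℝ) ≤ 1 - 2 / ((n:ℝ) + i + 1) := by
    intro i
    have hi : (0:ℝ) ≤ (i:ℝ) := Nat.cast_nonneg i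
    have hx : (0:ℝ) < (n:ℝ) + i + 1 := by linarith
    have : 2 / ((n:ℝ) + i + 1) ≤ 1 := by
      rw [div_le_one hx]; linarith
    linarith
  have hPnn : ∀ m, 0 ≤ P m := by
    intro m
    exact Finset.prod_nonneg fun i _ => hpos i
  have key : ∀ m, G m 0 0 - G m 1 0 = P m ∧ G m 0 1 - G m 1 1 = -P m := by
    intro m
    induction m with
    | zero =>
      rw [hG0, hF]
      simp [hP]
      constructor <;> ring
    | succ m ih =>
      rw [hGs m, hF]
      have h1 := ih.1
      have h2 := ih.2
      have hps : P (m+1) = P m * (1 - 2/((n:ℝ) + (m+1) + 1)) := by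
        simp [hP, Finset.prod_range_succ]
      constructor
      · simp only [Matrix.mul_apply, Fin.sum_univ_two, Matrix.cons_val', Matrix.cons_val_zero,
          Matrix.cons_val_one, Matrix.head_cons, Matrix.head_fin_const, Matrix.empty_val',
          Matrix.cons_val_fin_one, Matrix.of_apply]
        push_cast
        linear_combination (1 - 2/((n:ℝ) + m + 2)) * h1 - hps
      · simp only [Matrix.mul_apply, Fin.sum_univ_two, Matrix.cons_val', Matrix.cons_val_zero,
          Matrix.cons_val_one, Matrix.head_cons, Matrix.head_fin_const, Matrix.empty_val',
          Matrix.cons_val_fin_one, Matrix.of_apply]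
        push_cast
        linear_combination (1 - 2/((n:ℝ) + m + 2)) * h2 + hps
  have hexact : ∀ m, P m = ((n:ℝ) - 1) * n / (((n:ℝ) + m) * ((n:ℝ) + m + 1)) := by
    intro m
    induction m with
    | zero =>
      have h0 : (n:ℝ) ≠ 0 := by linarith
      have h1 : (n:ℝ) + 1 ≠ 0 := by linarith
      simp [hP]
      field_simp
      ring
    | succ m ih =>
      have hm : (0:ℝ) ≤ (m:ℝ) := Nat.cast_nonneg m
      have h0 : (n:ℝ) + m ≠ 0 := by linarith
      have h1 : (n:ℝ) + m + 1 ≠ 0 := by linarith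
      have h2 : (n:ℝ) + m + 2 ≠ 0 := by linarith
      have : P (m+1) = P m * (1 - 2/((n:ℝ) + (m+1) + 1)) := by
        simp [hP, Finset.prod_range_succ]
      rw [this, ih]
      push_cast
      field_simp
      ring
  have habs : ∀ m, |G m 0 0 - G m 1 0| + |G m 0 1 - G m 1 1| = 2 * P m := by
    intro m
    rw [(key m).1, (key m).2, abs_of_nonneg (hPnn m), abs_neg, abs_of_nonneg (hPnn m)]
    ring
  refine ⟨fun m => habs m, ?_⟩
  have := fun m => habs m
  simp only [habs]
  have hb : ∀ m : ℕ, 2 * P m ≤ 2 * (n:ℝ)^2 * (1 / (m + 1)) := by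
    intro m
    have hm : (0:ℝ) ≤ (m:ℝ) := Nat.cast_nonneg m
    have hkey : ((n:ℝ) - 1) * n / (((n:ℝ) + m) * ((n:ℝ) + m + 1)) ≤ (n:ℝ)^2 * (1 / (m + 1)) := by
      rw [mul_one_div, div_le_div_iff₀ (by nlinarith) (by nlinarith)]
      have h1 : (0:ℝ) ≤ (n:ℝ) - 1 := by linarith
      nlinarith [mul_nonneg h1 hm, mul_nonneg hm hm, mul_nonneg (mul_nonneg h1 hm) hm,
        mul_nonneg (mul_nonneg (le_trans zero_le_one hn1) hm) hm,
        mul_nonneg (le_trans zero_le_one hn1) hm, sq_nonneg ((n:ℝ)+m)]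
    rw [hexact m]
    linarith
  have hlim : Tendsto (fun m : ℕ => 2 * (n:ℝ)^2 * (1 / (m + 1))) atTop (nhds 0) := by
    have := tendsto_one_div_add_atTop_nhds_zero_nat.const_mul (2 * (n:ℝ)^2)
    simpa using this
  refine squeeze_zero (fun m => by nlinarith [hPnn m]) hb hlim
end
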